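/- Let G be a DAG with topological ordering ord, and let u, v be vertices with ord(v) < ord(u) and no directed path from v to u in G. Suppose (w,x) is an edge of G with x ⇝ u, and (y,z) is an edge of G with v ⇝ y, and ord(y) < ord(x). Then in G neither x ⇝ y nor z ⇝ w holds (so neither edge leads to the other in G), but in G+(u,v) the relation x ⇝ y holds, i.e., the edge (w,x) leads to the edge (y,z) for the first time upon insertion of (u,v). -/

import Mathlib

/-- Reachability: a directed path (possibly of length 0) from `x` to `y`. -/
def Reach {V : Type*} (E : V → V → Prop) : V → V → Prop :=
  Relation.ReflTransGen E

/-- A digraph is acyclic if it has no directed cycle. -/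
def Acyclic {V : Type*} (E : V → V → Prop) : Prop :=
  ∀ x, ¬ Relation.TransGen E x x

/-- `ord` is a topological ordering of the digraph `E`. -/
def IsTopOrd {V : Type*} {n : ℕ} (E : V → V → Prop) (ord : V ≃ Fin n) : Prop :=
  ∀ a b, E a b → ord a < ord b

/-- The graph `G + (u,v)`: the edge `(u,v)` is added to `E`. -/
def AddEdge {V : Type*} (E : V → V → Prop) (u v : V) : V → V → Prop :=
  fun a b => E a b ∨ (a = u ∧ b = v)

/-- `A = {x : ord v ≤ ord x ≤ ord u and x ⇝ u}`. -/
def AncS {V : Type*} {n : ℕ} (E : V → V → Prop) (ord : V ≃ Fin n) (u v : V) : Set V :=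
  {x | ord v ≤ ord x ∧ ord x ≤ ord u ∧ Reach E x u}

/-- `D = {x : ord v ≤ ord x ≤ ord u and v ⇝ x}`. -/
def DesS {V : Type*} {n : ℕ} (E : V → V → Prop) (ord : V ≃ Fin n) (u v : V) : Set V :=
  {x | ord v ≤ ord x ∧ ord x ≤ ord u ∧ Reach E v x}

/-- `ord'` is a canonical reordering for `ord, u, v`: conditions (a)-(d). -/
def IsCanonical {V : Type*} {n : ℕ} (E : V → V → Prop) (ord ord' : V ≃ Fin n)
    (u v : V) : Prop :=
  (∀ x, x ∉ AncS E ord u v ∪ DesS E ord u v → ord' x = ord x) ∧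
  (⇑ord' '' (AncS E ord u v ∪ DesS E ord u v) =
    ⇑ord '' (AncS E ord u v ∪ DesS E ord u v)) ∧
  (∀ x y, (x ∈ AncS E ord u v ∧ y ∈ AncS E ord u v) ∨
          (x ∈ DesS E ord u v ∧ y ∈ DesS E ord u v) →
      (ord' x < ord' y ↔ ord x < ord y)) ∧
  (∀ x ∈ AncS E ord u v, ∀ y ∈ DesS E ord u v, ord' x < ord' y)

theorem IsTopOrd.le_of_reach {V : Type*} {n : ℕ} {E : V → V → Prop} {ord : V ≃ Fin n}
    (htop : IsTopOrd E ord) {a b : V} (h : Reach E a b) : ord a ≤ ord b := by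
  induction h with
  | refl => exact le_rfl
  | tail _ hbc ih => exact ih.trans (htop _ _ hbc).le

theorem Reach.addEdge {V : Type*} {E : V → V → Prop} {a b : V} (h : Reach E a b)
    (u v : V) : Reach (AddEdge E u v) a b :=
  Relation.ReflTransGen.mono (fun _ _ => Or.inl) _ _ h

theorem reach_addEdge_of_reach_of_reach {V : Type*} {E : V → V → Prop} {a b u v : V}
    (hau : Reach E a u) (hvb : Reach E v b) : Reach (AddEdge E u v) a b :=
  (hau.addEdge u v).trans (Relation.ReflTransGen.head (Or.inr ⟨rfl, rfl⟩) (hvb.addEdge u v))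

theorem newly_related_edge_pair_general {V : Type*} {n : ℕ}
    (E : V → V → Prop)
    (ord : V ≃ Fin n) (htop : IsTopOrd E ord)
    (u v : V) (hnr : ¬ Reach E v u)
    (w x y z : V) (hwx : E w x) (hxu : Reach E x u)
    (hyz : E y z) (hvy : Reach E v y) (hord : ord y < ord x) :
    (¬ Reach E x y ∧ ¬ Reach E z w) ∧ Reach (AddEdge E u v) x y := by
  have hxy : ¬ Reach E x y := fun h => (htop.le_of_reach h).not_gt hord
  have hzw : ¬ Reach E z w := fun hzw =>
    hnr (hvy.trans (.head hyz (hzw.trans (.head hwx hxu))))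
  exact ⟨⟨hxy, hzw⟩, reach_addEdge_of_reach_of_reach hxu hvy⟩

/-- an edge `(w,x)` into an ancestor of `u` and an edge `(y,z)` out
of a descendant of `v` with `ord y < ord x`: neither edge leads to the other in
`G`, but `(w,x)` leads to `(y,z)` in `G + (u,v)`. -/
theorem newly_related_edge_pair {V : Type*} [Fintype V] {n : ℕ}
    (E : V → V → Prop) (hacyc : Acyclic E)
    (ord : V ≃ Fin n) (htop : IsTopOrd E ord)
    (u v : V) (huv : ord v < ord u) (hnr : ¬ Reach E v u)
    (w x y z : V) (hwx : E w x) (hxu : Reach E x u)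
    (hyz : E y z) (hvy : Reach E v y) (hord : ord y < ord x) :
    (¬ Reach E x y ∧ ¬ Reach E z w) ∧ Reach (AddEdge E u v) x y :=
  newly_related_edge_pair_general E ord htop u v hnr w x y z hwx hxu hyz hvy hord
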